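/- In the unified-xz-BB84 scheme, the map defined on orthonormal vectors by |0⟩_Ẽ|0_z⟩_A ↦ |E₁⟩|t'₋₁⟩ and |0⟩_Ẽ|1_z⟩_A ↦ |E₂⟩|t'₂⟩, with ⟨E₁|E₂⟩ = 0, is an isometry on its domain (hence extends to a unitary), and the resulting states, after passing through the interferometer U_IT extended to four input time modes t'₋₁, t'₀, t'₁, t'₂, have zero amplitude on every mode in J_error ∪ J_invalid for both the z-basis and x-basis interpretations; moreover the two Eve states |E₁⟩, |E₂⟩ are perfectly distinguishable. -/

import Mathlib

open Complex

/-- Amplitude of the (φ = 0) interferometer output at mode `m` (first component: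
`false` = straight arm `s`, `true` = down arm `d`; second component: time index)
for a single photon entering at input time mode `t'ᵢ`:
`|t'ᵢ⟩ ↦ (1/2)(|sᵢ⟩ − |s_{i+1}⟩ + i|dᵢ⟩ + i|d_{i+1}⟩)`. -/
noncomputable def amp0 (i : ℤ) : Bool × ℤ → ℂ := fun m =>
  if m.1 then
    (I / 2) * ((if m.2 = i then 1 else 0) + (if m.2 = i + 1 then 1 else 0))
  else
    (1 / 2) * ((if m.2 = i then 1 else 0) - (if m.2 = i + 1 then 1 else 0))

open ComplexConjugate

/-!
Since `Ψ b = amp0 i ⊗ E_b`, inner products of the states split into an amplitude factor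
and an Eve factor. The interferometer sends a single input mode to
four output amplitudes of modulus `1/2`, so each `Ψ b` is a unit vector, while the cross
terms vanish because the markers `E₁, E₂` are orthogonal. The inputs `t'₋₁` and `t'₂`
only reach output times `{-1, 0}` and `{2, 3}`: never time `1`, where the x-basis is
read, and never the time slot of the opposite z-bit.
-/

lemma amp0_eq_zero {i : ℤ} {m : Bool × ℤ} (h₀ : m.2 ≠ i) (h₁ : m.2 ≠ i + 1) :
    amp0 i m = 0 := by
  simp [amp0, h₀, h₁]

lemma support_amp0_subset (i : ℤ) :
    Function.support (amp0 i) ⊆ ↑((Finset.univ : Finset Bool) ×ˢ ({i, i + 1} : Finset ℤ)) := by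
  intro m hm
  by_contra hm'
  simp only [Finset.coe_product, Finset.coe_univ, Finset.coe_insert, Finset.coe_singleton,
    Set.mem_prod, Set.mem_univ, Set.mem_insert_iff, Set.mem_singleton_iff, true_and,
    not_or] at hm'
  exact hm (amp0_eq_zero hm'.1 hm'.2)

lemma finsum_conj_amp0_mul_self (i : ℤ) :
    ∑ᶠ m, conj (amp0 i m) * amp0 i m = 1 := by
  have hsupp : Function.support (fun m => conj (amp0 i m) * amp0 i m) ⊆
      ↑((Finset.univ : Finset Bool) ×ˢ ({i, i + 1} : Finset ℤ)) :=
    (Function.support_mul_subset_right _ _).trans (support_amp0_subset i)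
  rw [finsum_eq_sum_of_support_subset _ hsupp, Finset.sum_product, Fintype.sum_bool,
    Finset.sum_pair (by omega), Finset.sum_pair (by omega)]
  simp only [amp0, if_true, Bool.false_eq_true, if_false,
    if_neg (show i + 1 ≠ i by omega), if_neg (show i ≠ i + 1 by omega)]
  simp only [map_mul, map_div₀, map_one, map_ofNat, conj_I]
  ring_nf
  rw [I_sq]
  norm_num

lemma finsum_inner_smul_smul {F α : Type*} [NormedAddCommGroup F] [InnerProductSpace ℂ F]
    (f g : α → ℂ) (u v : F) :
    ∑ᶠ m, (inner ℂ (f m • u) (g m • v) : ℂ) = (∑ᶠ m, conj (f m) * g m) * inner ℂ u v := by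
  rw [finsum_mul]
  refine finsum_congr fun m => ?_
  rw [inner_smul_left, inner_smul_right, mul_assoc]

/-- The reversed-space attack on unified-xz-BB84: Eve maps `|0⟩_Ẽ|0_z⟩` to
`|E₁⟩|t'₋₁⟩` and `|0⟩_Ẽ|1_z⟩` to `|E₂⟩|t'₂⟩` with `⟨E₁|E₂⟩ = 0`.  The joint
states `Ψ b` after Bob's interferometer (`Ψ b m = amp0 (±) m • E_b`) form an
orthonormal pair (so the attack is an isometry on its domain and extends to a
unitary), and have zero amplitude on every mode of `J_error ∪ J_invalid` for
both interpretations: for bit 0 on modes `s₂, d₂` (z-errors) and `s₁, d₁`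
(x-basis outcomes), for bit 1 on `s₀, d₀` and `s₁, d₁`.  Moreover the Eve
markers `E₁, E₂` are perfectly distinguishable (orthogonal). -/
theorem stmt8 {F : Type*} [NormedAddCommGroup F] [InnerProductSpace ℂ F]
    (E₁ E₂ : F) (hE₁ : ‖E₁‖ = 1) (hE₂ : ‖E₂‖ = 1)
    (hortho : (inner ℂ E₁ E₂ : ℂ) = 0)
    (Ψ : Bool → Bool × ℤ → F)
    (hΨ : ∀ b m, Ψ b m = amp0 (if b then 2 else -1) m • (if b then E₂ else E₁)) :
    (∀ b b' : Bool,
      ∑ᶠ m : Bool × ℤ, (inner ℂ (Ψ b m) (Ψ b' m) : ℂ) = if b = b' then 1 else 0) ∧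
    (∀ b : Bool, ∀ a : Bool,
      Ψ b (a, 1) = 0 ∧ Ψ b (a, if b then 0 else 2) = 0) ∧
    (inner ℂ E₁ E₂ : ℂ) = 0 := by
  refine ⟨fun b b' => ?_, fun b a => ?_, hortho⟩
  · simp only [hΨ]
    rw [finsum_inner_smul_smul]
    cases b <;> cases b' <;>
      simp [finsum_conj_amp0_mul_self, hE₁, hE₂, hortho,
        inner_eq_zero_symm.mp hortho]
  · simp only [hΨ]
    cases b <;> constructor <;> rw [amp0_eq_zero (by norm_num) (by norm_num), zero_smul]
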